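/- arXiv:2601.23116 — 3 statements merged into one kernel-verified Lean document; each statement's English description precedes it below -/
import Mathlib

section
/- Let F be a set of density matrices on ℂ^d. For every density matrix ρ on ℂ^d and every free channel N, the free encoding capacity satisfies C_F(N(ρ)) ≤ C_F(ρ). -/
open scoped BigOperators ComplexOrder Matrix

namespace FECpaper

/-- Square complex matrices of size `d`, the ambient space for states on `ℂ^d`. -/
abbrev Mat (d : ℕ) := Matrix (Fin d) (Fin d) ℂ

/-- A density matrix: positive semidefinite with unit trace. -/
def IsDensityMatrix {d : ℕ} (ρ : Mat d) : Prop := ρ.PosSemidef ∧ ρ.trace = 1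

/-- Von Neumann entropy (base 2), via eigenvalues; junk value `0` for non-Hermitian input.
Note `Real.logb 2 0 = 0`, so the convention `0 · log₂ 0 = 0` holds automatically. -/
noncomputable def entropy {d : ℕ} (ρ : Mat d) : ℝ :=
  if h : ρ.IsHermitian then -∑ i, h.eigenvalues i * Real.logb 2 (h.eigenvalues i) else 0

/-- A quantum channel: a map admitting a Kraus representation with `∑ k, (L k)ᴴ * L k = 1`. -/
def IsChannel {d : ℕ} (N : Mat d → Mat d) : Prop :=
  ∃ (n : ℕ) (L : Fin n → Mat d),
    (∑ k, (L k)ᴴ * L k) = 1 ∧ ∀ A, N A = ∑ k, L k * A * (L k)ᴴ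

/-- A free channel for the set `F` of free states: a channel mapping `F` into `F`. -/
def IsFreeChannel {d : ℕ} (F : Set (Mat d)) (N : Mat d → Mat d) : Prop :=
  IsChannel N ∧ ∀ σ ∈ F, N σ ∈ F

/-- A (finitely supported) probability distribution. -/
def IsProb {ι : Type*} [Fintype ι] (p : ι → ℝ) : Prop :=
  (∀ x, 0 ≤ p x) ∧ ∑ x, p x = 1

/-- Holevo quantity of a finite ensemble of states:
`χ = S(∑ₓ pₓ ρₓ) − ∑ₓ pₓ S(ρₓ)`. -/
noncomputable def holevo {d : ℕ} {ι : Type*} [Fintype ι] (p : ι → ℝ) (ρs : ι → Mat d) : ℝ :=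
  entropy (∑ x, p x • ρs x) - ∑ x, p x * entropy (ρs x)

/-- Free encoding capacity of a state `ρ` for the resource theory with free states `F`:
the supremum of Holevo quantities of ensembles obtained from `ρ` by free channels. -/
noncomputable def FEC {d : ℕ} (F : Set (Mat d)) (ρ : Mat d) : ℝ :=
  sSup {c : ℝ | ∃ (n : ℕ) (p : Fin n → ℝ) (N : Fin n → (Mat d → Mat d)),
    IsProb p ∧ (∀ x, IsFreeChannel F (N x)) ∧ c = holevo p (fun x => N x ρ)}

/-- A stochastically free operation: a Kraus family with `∑ k, (L k)ᴴ * L k = 1` each of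
whose members maps every free state to a nonnegative scalar multiple of a free state. -/
def IsStochFree {d : ℕ} (F : Set (Mat d)) {n : ℕ} (L : Fin n → Mat d) : Prop :=
  (∑ k, (L k)ᴴ * L k) = 1 ∧
  ∀ k, ∀ σ ∈ F, ∃ (c : ℝ) (τ : Mat d), 0 ≤ c ∧ τ ∈ F ∧ L k * σ * (L k)ᴴ = c • τ

/-!
Precomposing with the free channel `N` turns every ensemble of free channels applied to `N ρ`
into one applied to `ρ`, so the Holevo quantities defining `C_F(N ρ)` form a subset of those
defining `C_F(ρ)`. Comparing the suprema needs both sets nonempty (the identity is free) and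
bounded above: a Holevo quantity of density matrices is at most the entropy of the average state,
hence at most `log₂ d` by Jensen's inequality for `-x log x` on its eigenvalues.
-/

open Real in
lemma sum_negMulLog_nonneg {ι : Type*} [Fintype ι] {q : ι → ℝ} (hq₀ : ∀ i, 0 ≤ q i)
    (hq₁ : ∑ i, q i = 1) : 0 ≤ ∑ i, negMulLog (q i) :=
  Finset.sum_nonneg fun i _ => negMulLog_nonneg (hq₀ i)
    (hq₁ ▸ Finset.single_le_sum (fun j _ => hq₀ j) (Finset.mem_univ i))

open Real in
lemma sum_negMulLog_le_log_card {ι : Type*} [Fintype ι] {q : ι → ℝ} (hq₀ : ∀ i, 0 ≤ q i)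
    (hq₁ : ∑ i, q i = 1) : ∑ i, negMulLog (q i) ≤ log (Fintype.card ι) := by
  set n : ℝ := (Fintype.card ι : ℝ)
  have hn : 0 < n := by
    have : Nonempty ι := by
      by_contra h
      simp [not_nonempty_iff.mp h] at hq₁
    exact Nat.cast_pos.2 Fintype.card_pos
  have jensen : ∑ i, n⁻¹ • negMulLog (q i) ≤ negMulLog (∑ i, n⁻¹ • q i) :=
    concaveOn_negMulLog.le_map_sum (fun _ _ => by positivity)
      (by simp [n, hn.ne']) (fun i _ => hq₀ i)
  rw [← Finset.smul_sum, ← Finset.smul_sum, hq₁, smul_eq_mul, smul_eq_mul, mul_one,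
    negMulLog, log_inv] at jensen
  rwa [neg_mul_neg, mul_le_mul_iff_right₀ (inv_pos.2 hn)] at jensen

namespace IsDensityMatrix

variable {d : ℕ} {ρ : Mat d}

lemma sum_eigenvalues (hρ : IsDensityMatrix ρ) : ∑ i, hρ.1.isHermitian.eigenvalues i = 1 := by
  rw [← Complex.ofReal_inj]
  simpa using hρ.1.isHermitian.trace_eq_sum_eigenvalues.symm.trans hρ.2

lemma entropy_eq (hρ : IsDensityMatrix ρ) :
    entropy ρ = (∑ i, Real.negMulLog (hρ.1.isHermitian.eigenvalues i)) / Real.log 2 := by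
  rw [entropy, dif_pos hρ.1.isHermitian, Finset.sum_div, ← Finset.sum_neg_distrib]
  refine Finset.sum_congr rfl fun i _ => ?_
  rw [Real.negMulLog, Real.logb]
  ring

lemma entropy_nonneg (hρ : IsDensityMatrix ρ) : 0 ≤ entropy ρ := by
  rw [hρ.entropy_eq]
  exact div_nonneg (sum_negMulLog_nonneg hρ.1.eigenvalues_nonneg hρ.sum_eigenvalues)
    (Real.log_nonneg one_le_two)

lemma entropy_le_logb_dim (hρ : IsDensityMatrix ρ) : entropy ρ ≤ Real.logb 2 d := by
  rw [hρ.entropy_eq, Real.logb]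
  gcongr
  simpa using sum_negMulLog_le_log_card hρ.1.eigenvalues_nonneg hρ.sum_eigenvalues

end IsDensityMatrix

lemma IsProb.isDensityMatrix_sum_smul {d : ℕ} {ι : Type*} [Fintype ι] {p : ι → ℝ}
    (hp : IsProb p) {ρs : ι → Mat d} (hρs : ∀ x, IsDensityMatrix (ρs x)) :
    IsDensityMatrix (∑ x, p x • ρs x) := by
  refine ⟨Matrix.posSemidef_sum _ fun x _ => (hρs x).1.smul (hp.1 x), ?_⟩
  simp only [Matrix.trace_sum, Matrix.trace_smul, fun x => (hρs x).2, Complex.real_smul, mul_one]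
  exact_mod_cast hp.2

lemma holevo_le_logb_dim {d : ℕ} {ι : Type*} [Fintype ι] {p : ι → ℝ} (hp : IsProb p)
    {ρs : ι → Mat d} (hρs : ∀ x, IsDensityMatrix (ρs x)) : holevo p ρs ≤ Real.logb 2 d := by
  have hmix := (hp.isDensityMatrix_sum_smul hρs).entropy_le_logb_dim
  have havg : 0 ≤ ∑ x, p x * entropy (ρs x) :=
    Finset.sum_nonneg fun x _ => mul_nonneg (hp.1 x) (hρs x).entropy_nonneg
  rw [holevo]
  linarith

lemma isChannel_of_kraus {d : ℕ} {ι : Type*} [Fintype ι] (L : ι → Mat d)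
    (hL : ∑ k, (L k)ᴴ * L k = 1) : IsChannel fun A => ∑ k, L k * A * (L k)ᴴ := by
  let e := (Fintype.equivFin ι).symm
  refine ⟨Fintype.card ι, L ∘ e, ?_, fun A => ?_⟩
  · simpa only [Function.comp_apply, e.sum_comp fun k => (L k)ᴴ * L k] using hL
  · simp only [Function.comp_apply, e.sum_comp fun k => L k * A * (L k)ᴴ]

lemma IsChannel.comp {d : ℕ} {N M : Mat d → Mat d} (hN : IsChannel N) (hM : IsChannel M) :
    IsChannel (N ∘ M) := by
  obtain ⟨n, L, hL, hN⟩ := hN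
  obtain ⟨m, K, hK, hM⟩ := hM
  have hNM : N ∘ M = fun A => ∑ q : Fin n × Fin m, (L q.1 * K q.2) * A * (L q.1 * K q.2)ᴴ := by
    ext1 A
    simp only [Function.comp_apply, hN, hM, Fintype.sum_prod_type, Finset.mul_sum,
      Finset.sum_mul, Matrix.conjTranspose_mul, mul_assoc]
  rw [hNM]
  refine isChannel_of_kraus _ ?_
  calc ∑ q : Fin n × Fin m, (L q.1 * K q.2)ᴴ * (L q.1 * K q.2)
      = ∑ l, (K l)ᴴ * (∑ k, (L k)ᴴ * L k) * K l := by
        simp only [Fintype.sum_prod_type_right, Finset.mul_sum, Finset.sum_mul,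
          Matrix.conjTranspose_mul, mul_assoc]
    _ = 1 := by simp only [hL, mul_one, hK]

lemma IsChannel.isDensityMatrix_apply {d : ℕ} {N : Mat d → Mat d} (hN : IsChannel N)
    {ρ : Mat d} (hρ : IsDensityMatrix ρ) : IsDensityMatrix (N ρ) := by
  obtain ⟨n, L, hL, hN⟩ := hN
  rw [hN]
  refine ⟨Matrix.posSemidef_sum _ fun k _ => hρ.1.mul_mul_conjTranspose_same (L k), ?_⟩
  simp only [Matrix.trace_sum, Matrix.trace_mul_cycle _ ρ]
  rw [← Matrix.trace_sum, ← Finset.sum_mul, hL, one_mul, hρ.2]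

lemma IsFreeChannel.comp {d : ℕ} {F : Set (Mat d)} {N M : Mat d → Mat d}
    (hN : IsFreeChannel F N) (hM : IsFreeChannel F M) : IsFreeChannel F (N ∘ M) :=
  ⟨hN.1.comp hM.1, fun σ hσ => hN.2 _ (hM.2 σ hσ)⟩

lemma isFreeChannel_id {d : ℕ} (F : Set (Mat d)) : IsFreeChannel F id :=
  ⟨⟨1, fun _ => 1, by simp, fun A => by simp⟩, fun _ hσ => hσ⟩

/-- (Monotonicity) For any set `F` of density matrices on `ℂ^d`, any
density matrix `ρ` and any free channel `N`, the free encoding capacity satisfies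
`C_F(N(ρ)) ≤ C_F(ρ)`. -/
theorem FEC_monotone {d : ℕ} (F : Set (Mat d)) (ρ : Mat d) (hρ : IsDensityMatrix ρ)
    (N : Mat d → Mat d) (hN : IsFreeChannel F N) :
    FEC F (N ρ) ≤ FEC F ρ := by
  apply csSup_le_csSup
  · refine ⟨Real.logb 2 d, ?_⟩
    rintro c ⟨n, p, Ns, hp, hfree, rfl⟩
    exact holevo_le_logb_dim hp fun x => (hfree x).1.isDensityMatrix_apply hρ
  · exact ⟨_, 1, fun _ => 1, fun _ => id, ⟨fun _ => zero_le_one, by simp⟩,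
      fun _ => isFreeChannel_id F, rfl⟩
  · rintro c ⟨n, p, Ns, hp, hfree, rfl⟩
    exact ⟨n, p, fun x => Ns x ∘ N, hp, fun x => (hfree x).comp hN, rfl⟩

end FECpaper
end

section
/- Consider the resource theory of purity on ℂ^d: the set of free states is F = {I/d} (the maximally mixed state), so the free channels are exactly the unital quantum channels (those with N(I/d) = I/d). Then for every density matrix ρ on ℂ^d, the free encoding capacity satisfies C_F(ρ) = log₂ d − S(ρ). -/
open scoped BigOperators ComplexOrder Matrix

namespace FECpaper

/-!
A free channel of the purity theory fixes `I/d`, i.e. it is unital. If `L k` are its Kraus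
operators, `u j` the eigenvectors of `ρ` and `v i` those of the output, the output eigenvalues are
`μ = B λ` with `B i j = ∑ k |⟪v i, L k u j⟫|²`, and `B` is doubly stochastic precisely because the
channel is unital and trace preserving. Concavity of `-x log x` then gives `S(ρ) ≤ S(N ρ)`, and
`S ≤ log₂ d` bounds the entropy of the average state, so every Holevo quantity is at most
`log₂ d - S(ρ)`. Equality is attained by the `d` unitaries that rotate `ρ` into its eigenbasis and
then shift that basis cyclically: each preserves the spectrum, and their uniform average is `I/d`.
-/

open Real Matrix

section Majorization

variable {n : Type*} [Fintype n]

theorem sum_negMulLog_le_log_card_s11 {x : n → ℝ} (hx : ∀ j, 0 ≤ x j) (hsum : ∑ j, x j = 1) :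
    ∑ j, negMulLog (x j) ≤ log (Fintype.card n) := by
  have hne : Nonempty n := by
    by_contra h
    simp [not_nonempty_iff.mp h] at hsum
  have hc : (0 : ℝ) < Fintype.card n := by positivity
  have hjensen := concaveOn_negMulLog.le_map_sum (t := Finset.univ)
    (w := fun _ => (Fintype.card n : ℝ)⁻¹) (p := x) (fun _ _ => by positivity)
    (by simp [hc.ne']) (fun j _ => hx j)
  rw [← Finset.smul_sum, ← Finset.smul_sum, hsum, smul_eq_mul, smul_eq_mul, mul_one,
    negMulLog, log_inv, neg_mul_neg, mul_le_mul_iff_of_pos_left (inv_pos.mpr hc)] at hjensen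
  exact hjensen

variable [DecidableEq n]

theorem sum_negMulLog_le_sum_negMulLog_mulVec {B : Matrix n n ℝ}
    (hB : B ∈ doublyStochastic ℝ n) {x : n → ℝ} (hx : ∀ j, 0 ≤ x j) :
    ∑ j, negMulLog (x j) ≤ ∑ i, negMulLog ((B *ᵥ x) i) := by
  obtain ⟨hB0, hrow, hcol⟩ := mem_doublyStochastic_iff_sum.mp hB
  calc ∑ j, negMulLog (x j) = ∑ i, ∑ j, B i j * negMulLog (x j) := by
        rw [Finset.sum_comm]; simp [← Finset.sum_mul, hcol]
    _ ≤ ∑ i, negMulLog ((B *ᵥ x) i) := Finset.sum_le_sum fun i _ => by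
        simpa [mulVec, dotProduct] using concaveOn_negMulLog.le_map_sum (t := Finset.univ)
          (fun j _ => hB0 i j) (hrow i) (fun j _ => hx j)

theorem mul_diagonal_mul_conjTranspose_apply_self (M : Matrix n n ℂ) (x : n → ℝ) (i : n) :
    (M * diagonal (fun j => (x j : ℂ)) * Mᴴ) i i =
      ((∑ j, Complex.normSq (M i j) * x j : ℝ) : ℂ) := by
  rw [mul_apply, Complex.ofReal_sum]
  refine Finset.sum_congr rfl fun j _ => ?_
  rw [mul_diagonal, conjTranspose_apply, Complex.star_def, Complex.ofReal_mul, ← Complex.mul_conj]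
  ring

theorem mul_conjTranspose_apply_self (M : Matrix n n ℂ) (i : n) :
    (M * Mᴴ) i i = ((∑ j, Complex.normSq (M i j) : ℝ) : ℂ) := by
  simpa using mul_diagonal_mul_conjTranspose_apply_self M 1 i

theorem conjTranspose_mul_apply_self (M : Matrix n n ℂ) (j : n) :
    (Mᴴ * M) j j = ((∑ i, Complex.normSq (M i j) : ℝ) : ℂ) := by
  simpa using mul_conjTranspose_apply_self Mᴴ j

variable {ι : Type*} [Fintype ι]

def krausTransition (M : ι → Matrix n n ℂ) : Matrix n n ℝ :=
  of fun i j => ∑ k, Complex.normSq (M k i j)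

theorem krausTransition_mem_doublyStochastic {M : ι → Matrix n n ℂ}
    (h₁ : ∑ k, (M k)ᴴ * M k = 1) (h₂ : ∑ k, M k * (M k)ᴴ = 1) :
    krausTransition M ∈ doublyStochastic ℝ n := by
  refine mem_doublyStochastic_iff_sum.mpr
    ⟨fun i j => Finset.sum_nonneg fun k _ => Complex.normSq_nonneg _, fun i => ?_, fun j => ?_⟩
  · have h := congr_fun₂ h₂ i i
    simp only [Matrix.sum_apply, mul_conjTranspose_apply_self, one_apply_eq] at h
    rw [← Complex.ofReal_sum, Complex.ofReal_eq_one, Finset.sum_comm] at h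
    exact h
  · have h := congr_fun₂ h₁ j j
    simp only [Matrix.sum_apply, conjTranspose_mul_apply_self, one_apply_eq] at h
    rw [← Complex.ofReal_sum, Complex.ofReal_eq_one, Finset.sum_comm] at h
    exact h

theorem sum_mul_diagonal_mul_conjTranspose_apply_self (M : ι → Matrix n n ℂ) (x : n → ℝ)
    (i : n) :
    (∑ k, M k * diagonal (fun j => (x j : ℂ)) * (M k)ᴴ) i i =
      ((krausTransition M *ᵥ x) i : ℂ) := by
  simp only [Matrix.sum_apply, mul_diagonal_mul_conjTranspose_apply_self, mulVec, dotProduct,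
    krausTransition, of_apply, Finset.sum_mul, Complex.ofReal_sum]
  exact Finset.sum_comm

theorem sum_conjTranspose_mul_self_of_unitary {A B : Matrix n n ℂ} (hA : A ∈ unitaryGroup n ℂ)
    (hB : B ∈ unitaryGroup n ℂ) {L : ι → Matrix n n ℂ} (hL : ∑ k, (L k)ᴴ * L k = 1) :
    ∑ k, (A * L k * B)ᴴ * (A * L k * B) = 1 := by
  have hA' : Aᴴ * A = 1 := mem_unitaryGroup_iff'.mp hA
  have hterm : ∀ k, (A * L k * B)ᴴ * (A * L k * B) = Bᴴ * ((L k)ᴴ * L k) * B := fun k =>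
    calc (A * L k * B)ᴴ * (A * L k * B) = Bᴴ * (L k)ᴴ * (Aᴴ * A) * L k * B := by
          simp only [conjTranspose_mul, Matrix.mul_assoc]
      _ = Bᴴ * ((L k)ᴴ * L k) * B := by rw [hA', Matrix.mul_one]; simp only [Matrix.mul_assoc]
  rw [Finset.sum_congr rfl fun k _ => hterm k, ← Finset.sum_mul, ← Finset.mul_sum, hL,
    Matrix.mul_one]
  exact mem_unitaryGroup_iff'.mp hB

theorem sum_mul_conjTranspose_self_of_unitary {A B : Matrix n n ℂ} (hA : A ∈ unitaryGroup n ℂ)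
    (hB : B ∈ unitaryGroup n ℂ) {L : ι → Matrix n n ℂ} (hL : ∑ k, L k * (L k)ᴴ = 1) :
    ∑ k, (A * L k * B) * (A * L k * B)ᴴ = 1 := by
  have := sum_conjTranspose_mul_self_of_unitary (Unitary.star_mem hB) (Unitary.star_mem hA)
    (L := fun k => (L k)ᴴ) (by simpa using hL)
  simpa [Matrix.mul_assoc, star_eq_conjTranspose] using this

theorem exists_doublyStochastic_eigenvalues_sum_conj {ρ : Matrix n n ℂ} (hρ : ρ.IsHermitian)
    {L : ι → Matrix n n ℂ} (h₁ : ∑ k, (L k)ᴴ * L k = 1) (h₂ : ∑ k, L k * (L k)ᴴ = 1)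
    (hσ : (∑ k, L k * ρ * (L k)ᴴ).IsHermitian) :
    ∃ B ∈ doublyStochastic ℝ n, hσ.eigenvalues = B *ᵥ hρ.eigenvalues := by
  set U := hρ.eigenvectorUnitary
  set V := hσ.eigenvectorUnitary
  set M : ι → Matrix n n ℂ := fun k => star (V : Matrix n n ℂ) * L k * U
  refine ⟨krausTransition M, krausTransition_mem_doublyStochastic
    (sum_conjTranspose_mul_self_of_unitary (Unitary.star_mem V.2) U.2 h₁)
    (sum_mul_conjTranspose_self_of_unitary (Unitary.star_mem V.2) U.2 h₂), funext fun i => ?_⟩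
  have hρ_eq : ρ = U * diagonal (fun j => (hρ.eigenvalues j : ℂ)) * star (U : Matrix n n ℂ) :=
    hρ.spectral_theorem
  have hσ_diag : star (V : Matrix n n ℂ) * (∑ k, L k * ρ * (L k)ᴴ) * V
      = diagonal (fun j => (hσ.eigenvalues j : ℂ)) := by
    have := hσ.conjStarAlgAut_star_eigenvectorUnitary
    rwa [Unitary.conjStarAlgAut_star_apply] at this
  have hσ_conj : star (V : Matrix n n ℂ) * (∑ k, L k * ρ * (L k)ᴴ) * V
      = ∑ k, M k * diagonal (fun j => (hρ.eigenvalues j : ℂ)) * (M k)ᴴ := by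
    rw [Finset.mul_sum, Finset.sum_mul]
    refine Finset.sum_congr rfl fun k _ => ?_
    conv_lhs => rw [hρ_eq]
    simp only [M, conjTranspose_mul, star_eq_conjTranspose, conjTranspose_conjTranspose,
      Matrix.mul_assoc]
  have := congr_fun₂ (hσ_diag.symm.trans hσ_conj) i i
  rw [diagonal_apply_eq, sum_mul_diagonal_mul_conjTranspose_apply_self] at this
  exact_mod_cast this

end Majorization

section Entropy

variable {d : ℕ}

theorem IsDensityMatrix.neZero {ρ : Mat d} (hρ : IsDensityMatrix ρ) : NeZero d :=
  ⟨by rintro rfl; simpa [Matrix.trace] using hρ.2⟩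

theorem IsDensityMatrix.sum_eigenvalues_s11 {ρ : Mat d} (hρ : IsDensityMatrix ρ) :
    ∑ i, hρ.1.1.eigenvalues i = 1 := by
  have htr := hρ.2
  rw [hρ.1.1.trace_eq_sum_eigenvalues] at htr
  simpa using congrArg Complex.re htr

theorem entropy_eq_sum_negMulLog {A : Mat d} (hA : A.IsHermitian) :
    entropy A = (∑ i, negMulLog (hA.eigenvalues i)) / log 2 := by
  rw [entropy, dif_pos hA, ← Finset.sum_neg_distrib, Finset.sum_div]
  congr 1 with i
  rw [negMulLog, logb]
  ring

theorem entropy_le_logb {τ : Mat d} (hτ : IsDensityMatrix τ) : entropy τ ≤ logb 2 d := by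
  rw [entropy_eq_sum_negMulLog hτ.1.1, logb]
  gcongr ?_ / _
  simpa using sum_negMulLog_le_log_card_s11 hτ.1.eigenvalues_nonneg hτ.sum_eigenvalues_s11

theorem entropy_le_entropy_sum_conj {ι : Type*} [Fintype ι] {ρ : Mat d} (hρ : ρ.PosSemidef)
    {L : ι → Mat d} (h₁ : ∑ k, (L k)ᴴ * L k = 1) (h₂ : ∑ k, L k * (L k)ᴴ = 1) :
    entropy ρ ≤ entropy (∑ k, L k * ρ * (L k)ᴴ) := by
  have hσ : (∑ k, L k * ρ * (L k)ᴴ).IsHermitian :=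
    (posSemidef_sum _ fun k _ => hρ.mul_mul_conjTranspose_same (L k)).1
  obtain ⟨B, hB, hμ⟩ := exists_doublyStochastic_eigenvalues_sum_conj hρ.1 h₁ h₂ hσ
  rw [entropy_eq_sum_negMulLog hρ.1, entropy_eq_sum_negMulLog hσ, hμ]
  gcongr ?_ / _
  exact sum_negMulLog_le_sum_negMulLog_mulVec hB hρ.eigenvalues_nonneg

theorem entropy_eq_of_charpoly_eq {A B : Mat d} (hA : A.IsHermitian) (hB : B.IsHermitian)
    (h : A.charpoly = B.charpoly) : entropy A = entropy B := by
  rw [entropy, entropy, dif_pos hA, dif_pos hB, (hA.eigenvalues_eq_eigenvalues_iff hB).mpr h]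

theorem entropy_unitary_conj {W ρ : Mat d} (hW : W ∈ unitaryGroup (Fin d) ℂ)
    (hρ : ρ.IsHermitian) : entropy (W * ρ * Wᴴ) = entropy ρ := by
  refine entropy_eq_of_charpoly_eq (isHermitian_mul_mul_conjTranspose W hρ) hρ ?_
  rw [charpoly_mul_comm, ← Matrix.mul_assoc, ← star_eq_conjTranspose,
    mem_unitaryGroup_iff'.mp hW, Matrix.one_mul]

theorem entropy_maximallyMixed [NeZero d] :
    entropy ((d : ℂ)⁻¹ • 1 : Mat d) = logb 2 d := by
  have hscalar : ((d : ℂ)⁻¹ • 1 : Mat d) = algebraMap ℝ (Mat d) (d : ℝ)⁻¹ := by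
    rw [Algebra.algebraMap_eq_smul_one, ← Complex.coe_smul]
    push_cast
    rfl
  have hA : ((d : ℂ)⁻¹ • 1 : Mat d).IsHermitian :=
    isHermitian_one.smul (by simp [IsSelfAdjoint])
  have hev : ∀ i, hA.eigenvalues i = (d : ℝ)⁻¹ := fun i => by
    simpa [hscalar, spectrum.scalar_eq] using hA.eigenvalues_mem_spectrum_real i
  have hd : (d : ℝ) ≠ 0 := NeZero.ne _
  rw [entropy, dif_pos hA]
  simp only [hev, Finset.sum_const, Finset.card_univ, Fintype.card_fin, nsmul_eq_mul, logb_inv]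
  field_simp

end Entropy

section Channels

variable {d : ℕ}

theorem IsDensityMatrix.sum_smul {ι : Type*} [Fintype ι] {p : ι → ℝ} (hp : IsProb p)
    {ρs : ι → Mat d} (h : ∀ x, IsDensityMatrix (ρs x)) :
    IsDensityMatrix (∑ x, p x • ρs x) := by
  refine ⟨posSemidef_sum _ fun x _ => (h x).1.smul (hp.1 x), ?_⟩
  simp only [trace_sum, trace_smul, (h _).2, Complex.real_smul, mul_one]
  exact_mod_cast hp.2

theorem IsChannel.isDensityMatrix {N : Mat d → Mat d} (hN : IsChannel N) {ρ : Mat d}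
    (hρ : IsDensityMatrix ρ) : IsDensityMatrix (N ρ) := by
  obtain ⟨m, L, hL, hN⟩ := hN
  rw [hN]
  refine ⟨posSemidef_sum _ fun k _ => hρ.1.mul_mul_conjTranspose_same (L k), ?_⟩
  simp only [trace_sum, trace_mul_cycle (L _) ρ]
  rw [← trace_sum, ← Finset.sum_mul, hL, Matrix.one_mul, hρ.2]

theorem IsFreeChannel.exists_unital_kraus {c : ℂ} (hc : c ≠ 0) {N : Mat d → Mat d}
    (hN : IsFreeChannel {c • 1} N) :
    ∃ (m : ℕ) (L : Fin m → Mat d), ∑ k, (L k)ᴴ * L k = 1 ∧ ∑ k, L k * (L k)ᴴ = 1 ∧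
      ∀ A, N A = ∑ k, L k * A * (L k)ᴴ := by
  obtain ⟨⟨m, L, hL, hNL⟩, hfree⟩ := hN
  refine ⟨m, L, hL, ?_, hNL⟩
  have hfix := hfree _ rfl
  rw [Set.mem_singleton_iff, hNL] at hfix
  simp only [Matrix.mul_smul, Matrix.smul_mul, Matrix.mul_one, ← Finset.smul_sum] at hfix
  exact smul_right_injective _ hc hfix

theorem IsFreeChannel.entropy_le {c : ℂ} (hc : c ≠ 0) {N : Mat d → Mat d}
    (hN : IsFreeChannel {c • 1} N) {ρ : Mat d} (hρ : ρ.PosSemidef) :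
    entropy ρ ≤ entropy (N ρ) := by
  obtain ⟨m, L, h₁, h₂, hNL⟩ := hN.exists_unital_kraus hc
  rw [hNL]
  exact entropy_le_entropy_sum_conj hρ h₁ h₂

theorem isFreeChannel_unitary_conj {W : Mat d} (hW : W ∈ unitaryGroup (Fin d) ℂ) (c : ℂ) :
    IsFreeChannel {c • 1} fun A => W * A * Wᴴ := by
  refine ⟨⟨1, fun _ => W, ?_, fun A => by simp⟩, ?_⟩
  · simpa [star_eq_conjTranspose] using mem_unitaryGroup_iff'.mp hW
  · rintro σ rfl
    simpa [star_eq_conjTranspose] using congrArg (c • ·) (mem_unitaryGroup_iff.mp hW)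

theorem holevo_le_sub {ι : Type*} [Fintype ι] {p : ι → ℝ} (hp : IsProb p) {ρs : ι → Mat d}
    {a b : ℝ} (hmix : entropy (∑ x, p x • ρs x) ≤ a) (hρs : ∀ x, b ≤ entropy (ρs x)) :
    holevo p ρs ≤ a - b := by
  have hb : b ≤ ∑ x, p x * entropy (ρs x) :=
    calc b = ∑ x, p x * b := by rw [← Finset.sum_mul, hp.2, one_mul]
      _ ≤ ∑ x, p x * entropy (ρs x) :=
        Finset.sum_le_sum fun x _ => mul_le_mul_of_nonneg_left (hρs x) (hp.1 x)
  unfold holevo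
  linarith

end Channels

section Twirl

variable {G : Type*} [AddGroup G] [Fintype G] [DecidableEq G]

theorem exists_unitary_conj_eq_diagonal_shift {ρ : Matrix G G ℂ} (hρ : ρ.IsHermitian) (a : G) :
    ∃ W ∈ unitaryGroup G ℂ, W * ρ * Wᴴ = diagonal fun i => (hρ.eigenvalues (i + a) : ℂ) := by
  set V : Matrix G G ℂ := (hρ.eigenvectorUnitary : Matrix G G ℂ)
  have hV : Vᴴ * V = 1 := mem_unitaryGroup_iff'.mp hρ.eigenvectorUnitary.2
  have hdiag : Vᴴ * ρ * V = diagonal fun i => (hρ.eigenvalues i : ℂ) := by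
    have := hρ.conjStarAlgAut_star_eigenvectorUnitary
    rwa [Unitary.conjStarAlgAut_star_apply] at this
  set e := Equiv.addRight a
  set r := Equiv.refl G
  -- `W = Vᴴ` with its rows permuted by `e`: diagonalize, then shift the eigenbasis.
  have hW : (Vᴴ.submatrix e r)ᴴ = V.submatrix r e := by
    rw [conjTranspose_submatrix, conjTranspose_conjTranspose]
  refine ⟨Vᴴ.submatrix e r, mem_unitaryGroup_iff.mpr ?_, ?_⟩
  · rw [star_eq_conjTranspose, hW, submatrix_mul_equiv, hV, submatrix_one_equiv]
  · calc Vᴴ.submatrix e r * ρ * (Vᴴ.submatrix e r)ᴴ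
          = Vᴴ.submatrix e r * ρ.submatrix r r * V.submatrix r e := by
            rw [hW]; rfl
      _ = diagonal fun i => (hρ.eigenvalues (i + a) : ℂ) := by
            rw [submatrix_mul_equiv, submatrix_mul_equiv, hdiag, submatrix_diagonal_equiv]
            rfl

theorem sum_diagonal_add_right (f : G → ℂ) :
    ∑ a, diagonal (fun i => f (i + a)) = (∑ a, f a) • (1 : Matrix G G ℂ) := by
  ext i j
  rw [Matrix.sum_apply, Matrix.smul_apply, one_apply]
  by_cases h : i = j
  · subst h
    simpa using Equiv.sum_comp (Equiv.addLeft i) f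
  · simp [h]

end Twirl

section Purity

variable {d : ℕ}

def holevoValues (F : Set (Mat d)) (ρ : Mat d) : Set ℝ :=
  {c : ℝ | ∃ (n : ℕ) (p : Fin n → ℝ) (N : Fin n → (Mat d → Mat d)),
    IsProb p ∧ (∀ x, IsFreeChannel F (N x)) ∧ c = holevo p (fun x => N x ρ)}

theorem logb_sub_entropy_mem_upperBounds_holevoValues [NeZero d] {ρ : Mat d}
    (hρ : IsDensityMatrix ρ) :
    logb 2 d - entropy ρ ∈ upperBounds (holevoValues {((d : ℂ)⁻¹ • 1 : Mat d)} ρ) := by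
  rintro _ ⟨m, p, N, hp, hN, rfl⟩
  have hd : (d : ℂ)⁻¹ ≠ 0 := inv_ne_zero (NeZero.ne _)
  exact holevo_le_sub hp
    (entropy_le_logb (IsDensityMatrix.sum_smul hp fun x => (hN x).1.isDensityMatrix hρ))
    (fun x => (hN x).entropy_le hd hρ.1)

theorem logb_sub_entropy_mem_holevoValues [NeZero d] {ρ : Mat d} (hρ : IsDensityMatrix ρ) :
    logb 2 d - entropy ρ ∈ holevoValues {((d : ℂ)⁻¹ • 1 : Mat d)} ρ := by
  choose W hWu hWρ using exists_unitary_conj_eq_diagonal_shift hρ.1.1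
  have hd : (d : ℝ) ≠ 0 := NeZero.ne _
  have hsum : ∑ i, (hρ.1.1.eigenvalues i : ℂ) = 1 := by exact_mod_cast hρ.sum_eigenvalues_s11
  have hmix : ∑ a, (d : ℝ)⁻¹ • (W a * ρ * (W a)ᴴ) = ((d : ℂ)⁻¹ • 1 : Mat d) := by
    rw [← Finset.smul_sum, Finset.sum_congr rfl fun a _ => hWρ a,
      sum_diagonal_add_right (fun i => (hρ.1.1.eigenvalues i : ℂ)), hsum, one_smul,
      ← Complex.coe_smul]
    push_cast
    rfl
  refine ⟨d, fun _ => (d : ℝ)⁻¹, fun a A => W a * A * (W a)ᴴ, ⟨fun _ => by positivity, ?_⟩,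
    fun a => isFreeChannel_unitary_conj (hWu a) _, ?_⟩
  · simp [hd]
  · simp only [holevo, hmix, entropy_maximallyMixed, entropy_unitary_conj (hWu _) hρ.1.1]
    simp [hd]

end Purity

theorem FEC_purity_general {d : ℕ} (ρ : Mat d) (hρ : IsDensityMatrix ρ) :
    FEC {((d : ℂ)⁻¹ • 1 : Mat d)} ρ = Real.logb 2 d - entropy ρ := by
  have := hρ.neZero
  exact IsGreatest.csSup_eq
    ⟨logb_sub_entropy_mem_holevoValues hρ, logb_sub_entropy_mem_upperBounds_holevoValues hρ⟩

/-- In the resource theory of purity on `ℂ^d` (free states `{I/d}`,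
free channels the unital ones), the free encoding capacity of any density matrix `ρ` is
`C(ρ) = log₂ d − S(ρ)`. -/
theorem FEC_purity {d : ℕ} (hd : 0 < d) (ρ : Mat d) (hρ : IsDensityMatrix ρ) :
    FEC {((d : ℂ)⁻¹ • 1 : Mat d)} ρ = Real.logb 2 d - entropy ρ :=
  FEC_purity_general ρ hρ

end FECpaper
end

section
/- Consider the resource theory of activity on qubits: the set of free states is P₂ = { diag(q, 1−q) : 1/2 ≤ q ≤ 1 } (the passive qubit states), and the free channels are the quantum channels on ℂ² mapping P₂ into P₂. Then for every passive state ρ ∈ P₂, the free encoding capacity satisfies C_{P₂}(ρ) = sup_{q ∈ [0,1]} [ S(q·diag(1,0) + (1−q)·diag(1/2,1/2)) − (1−q) ]; in particular, C_{P₂} takes the same value (approximately 0.322 bits, attained near q = 0.6) on every passive qubit state. -/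
open scoped BigOperators ComplexOrder Matrix

namespace FECpaper

/-- The set of passive qubit states: `P₂ = {diag(q, 1−q) : 1/2 ≤ q ≤ 1}`. -/
def P2 : Set (Mat 2) :=
  {M | ∃ q : ℝ, 1/2 ≤ q ∧ q ≤ 1 ∧ M = Matrix.diagonal ![(q : ℂ), ((1 - q : ℝ) : ℂ)]}

/-!
A free channel maps a passive state to a passive state `diag(q, 1 - q)`, so the Holevo quantity
of a free ensemble applied to `ρ ∈ P₂` is `H(q̄) - ∑ₓ pₓ H(qₓ)`, with `H` the binary entropy in
bits and `q̄ = ∑ₓ pₓ qₓ`. On `[1/2, 1]` the concave function `H` lies above its chord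
`q ↦ 2(1 - q)`, so this is at most `H(q̄) - 2(1 - q̄)`, the target expression at `t = 2q̄ - 1`.
Conversely, that value is attained by mixing, with weights `t` and `1 - t`, the two free channels
that replace every state by `diag(1, 0)` and by `diag(1/2, 1/2)`.
-/

open Matrix

theorem entropy_diagonal {d : ℕ} (v : Fin d → ℝ) :
    entropy (diagonal fun i => (v i : ℂ)) = -∑ i, v i * Real.logb 2 (v i) := by
  have hA : (diagonal fun i => (v i : ℂ)).IsHermitian :=
    isHermitian_diagonal_iff.mpr fun i => by simp [IsSelfAdjoint]
  have heig : Multiset.map hA.eigenvalues Finset.univ.val = Multiset.map v Finset.univ.val := by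
    apply Multiset.map_injective Complex.ofReal_injective
    rw [Multiset.map_map, Multiset.map_map]
    refine hA.roots_charpoly_eq_eigenvalues.symm.trans ?_
    rw [charpoly_diagonal, Finset.prod_eq_multiset_prod,
      ← Polynomial.roots_multiset_prod_X_sub_C (Multiset.map (Complex.ofReal ∘ v) Finset.univ.val),
      Multiset.map_map]
    rfl
  have hsum : ∀ g : Fin d → ℝ, ∑ i, g i * Real.logb 2 (g i) =
      ((Finset.univ.val.map g).map fun x => x * Real.logb 2 x).sum := fun g => by
    rw [Multiset.map_map]; rfl
  rw [entropy, dif_pos hA, hsum, hsum, heig]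

def replaceChannel {d : ℕ} (σ : Mat d) : Mat d → Mat d := fun A => A.trace • σ

theorem isChannel_replaceChannel_diagonal {d : ℕ} {w : Fin d → ℝ} (hw : IsProb w) :
    IsChannel (replaceChannel (diagonal fun i => (w i : ℂ))) := by
  set e := (finProdFinEquiv : Fin d × Fin d ≃ Fin (d * d))
  set L : Fin d × Fin d → Mat d := fun ij => single ij.1 ij.2 (Real.sqrt (w ij.1) : ℂ)
  have hsq : ∀ i, (Real.sqrt (w i) : ℂ) * (Real.sqrt (w i) : ℂ) = w i := fun i => by
    rw [← Complex.ofReal_mul, Real.mul_self_sqrt (hw.1 i)]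
  have hsum_single :
      ∀ (j : Fin d) (c : Fin d → ℂ), ∑ i, single j j (c i) = single j j (∑ i, c i) :=
    fun j c => (map_sum (singleAddMonoidHom j j) c _).symm
  refine ⟨d * d, L ∘ e.symm, ?_, fun A => ?_⟩
  · simp only [Function.comp_apply]
    rw [e.symm.sum_comp (fun ij => (L ij)ᴴ * L ij), Fintype.sum_prod_type, Finset.sum_comm]
    simp only [L, conjTranspose_single, single_mul_single_same, Complex.star_def,
      Complex.conj_ofReal, hsq, hsum_single]
    rw [← Complex.ofReal_sum, hw.2, Complex.ofReal_one, sum_single_one]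
  · simp only [replaceChannel, Function.comp_apply]
    rw [e.symm.sum_comp (fun ij => L ij * A * (L ij)ᴴ), Fintype.sum_prod_type]
    simp only [L, conjTranspose_single, single_mul_mul_single, Complex.star_def,
      Complex.conj_ofReal, hsum_single]
    rw [sum_single_eq_diagonal, ← diagonal_smul]
    congr 1
    funext i
    simp only [Pi.smul_apply, smul_eq_mul, trace, diag_apply, Finset.sum_mul]
    exact Finset.sum_congr rfl fun j _ => by rw [← hsq]; ring

noncomputable def diagQubit (s : ℝ) : Mat 2 := diagonal ![(s : ℂ), ((1 - s : ℝ) : ℂ)]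

theorem diagQubit_eq_diagonal (s : ℝ) :
    diagQubit s = diagonal fun i => ((![s, 1 - s] i : ℝ) : ℂ) := by
  unfold diagQubit
  congr 1
  funext i
  fin_cases i <;> rfl

theorem trace_diagQubit (s : ℝ) : (diagQubit s).trace = 1 := by
  simp [diagQubit, trace_diagonal]

theorem trace_eq_one_of_mem_P2 {ρ : Mat 2} (hρ : ρ ∈ P2) : ρ.trace = 1 := by
  obtain ⟨q, -, -, rfl⟩ := hρ
  exact trace_diagQubit q

theorem entropy_diagQubit (s : ℝ) : entropy (diagQubit s) = Real.binEntropy s / Real.log 2 := by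
  rw [diagQubit_eq_diagonal, entropy_diagonal, Fin.sum_univ_two]
  simp only [Real.binEntropy, Real.logb, Real.log_inv, Matrix.cons_val_zero, Matrix.cons_val_one]
  ring

theorem sum_smul_diagQubit {ι : Type*} [Fintype ι] {p : ι → ℝ} (hp : ∑ x, p x = 1) (q : ι → ℝ) :
    ∑ x, p x • diagQubit (q x) = diagQubit (∑ x, p x * q x) := by
  have key : ∑ x, p x * (1 - q x) = 1 - ∑ x, p x * q x := by
    simp only [mul_sub, mul_one, Finset.sum_sub_distrib, hp]
  ext i j
  rw [Matrix.sum_apply]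
  fin_cases i <;> fin_cases j <;>
    simp [diagQubit, Complex.real_smul, ← key]

theorem smul_add_smul_eq_diagQubit (t : ℝ) :
    t • diagonal ![(1 : ℂ), 0] + (1 - t) • diagonal ![(1/2 : ℂ), (1/2 : ℂ)] =
      diagQubit ((1 + t) / 2) := by
  ext i j
  fin_cases i <;> fin_cases j <;>
    simp [diagQubit, Complex.real_smul] <;> ring

theorem two_mul_one_sub_mul_log_two_le_binEntropy {s : ℝ} (hs : s ∈ Set.Icc (1/2 : ℝ) 1) :
    2 * (1 - s) * Real.log 2 ≤ Real.binEntropy s := by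
  -- `s = 2(1 - s) • (1/2) + (2s - 1) • 1`, and `binEntropy` is `log 2` at `1/2` and `0` at `1`.
  have hchord := Real.strictConcave_binEntropy.concaveOn.2
      (show (2:ℝ)⁻¹ ∈ Set.Icc (0:ℝ) 1 by norm_num) (show (1:ℝ) ∈ Set.Icc (0:ℝ) 1 by norm_num)
      (by linarith [hs.2] : (0:ℝ) ≤ 2 * (1 - s)) (by linarith [hs.1] : (0:ℝ) ≤ 2 * s - 1) (by ring)
  simp only [smul_eq_mul, Real.binEntropy_two_inv, Real.binEntropy_one, mul_zero, add_zero]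
    at hchord
  rwa [show 2 * (1 - s) * 2⁻¹ + (2 * s - 1) * 1 = s by ring] at hchord

theorem exists_holevo_diagQubit_le {ι : Type*} [Fintype ι] {p : ι → ℝ} (hp : IsProb p)
    {q : ι → ℝ} (hq : ∀ x, q x ∈ Set.Icc (1/2 : ℝ) 1) :
    ∃ t ∈ Set.Icc (0 : ℝ) 1,
      holevo p (fun x => diagQubit (q x)) ≤ entropy (diagQubit ((1 + t) / 2)) - (1 - t) := by
  set s := ∑ x, p x * q x
  have hs : s ∈ Set.Icc (1/2 : ℝ) 1 :=
    (convex_Icc _ _).sum_mem (fun x _ => hp.1 x) hp.2 (fun x _ => hq x)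
  have hchord : ∀ x, 2 * (1 - q x) ≤ entropy (diagQubit (q x)) := fun x => by
    rw [entropy_diagQubit, le_div_iff₀ (Real.log_pos one_lt_two)]
    exact two_mul_one_sub_mul_log_two_le_binEntropy (hq x)
  have hmean : ∑ x, p x * (2 * (1 - q x)) = 2 * (1 - s) := by
    simp only [mul_sub, mul_one, Finset.sum_sub_distrib, ← Finset.sum_mul, mul_left_comm (p _) 2,
      ← Finset.mul_sum, hp.2, s]
    ring
  refine ⟨2 * s - 1, ⟨by linarith [hs.1], by linarith [hs.2]⟩, ?_⟩
  calc holevo p (fun x => diagQubit (q x))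
      = entropy (diagQubit s) - ∑ x, p x * entropy (diagQubit (q x)) := by
        rw [holevo, sum_smul_diagQubit hp.2]
    _ ≤ entropy (diagQubit s) - ∑ x, p x * (2 * (1 - q x)) :=
        sub_le_sub_left (Finset.sum_le_sum fun x _ =>
          mul_le_mul_of_nonneg_left (hchord x) (hp.1 x)) _
    _ = entropy (diagQubit ((1 + (2 * s - 1)) / 2)) - (1 - (2 * s - 1)) := by
        rw [hmean]; ring_nf

theorem isFreeChannel_replaceChannel_diagQubit {s : ℝ} (hs : s ∈ Set.Icc (1/2 : ℝ) 1) :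
    IsFreeChannel P2 (replaceChannel (diagQubit s)) := by
  refine ⟨?_, fun σ hσ => ?_⟩
  · rw [diagQubit_eq_diagonal]
    refine isChannel_replaceChannel_diagonal ⟨fun i => ?_, by simp⟩
    fin_cases i
    · exact le_trans (by norm_num) hs.1
    · exact sub_nonneg.mpr hs.2
  · rw [replaceChannel, trace_eq_one_of_mem_P2 hσ, one_smul]
    exact ⟨s, hs.1, hs.2, rfl⟩

theorem isProb_pair {t : ℝ} (ht : t ∈ Set.Icc (0 : ℝ) 1) : IsProb ![t, 1 - t] := by
  refine ⟨fun x => ?_, by simp⟩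
  fin_cases x
  · exact ht.1
  · exact sub_nonneg.mpr ht.2

theorem holevo_replaceChannel_diagQubit {ρ : Mat 2} (hρ : ρ.trace = 1) (t : ℝ) :
    holevo ![t, 1 - t]
        (fun x => ![replaceChannel (diagQubit 1), replaceChannel (diagQubit (1/2))] x ρ) =
      entropy (diagQubit ((1 + t) / 2)) - (1 - t) := by
  have hout : (fun x => ![replaceChannel (diagQubit 1), replaceChannel (diagQubit (1/2))] x ρ)
      = fun x => diagQubit (![1, 1/2] x) := by
    funext x
    fin_cases x <;> simp [replaceChannel, hρ]
  rw [hout, holevo, sum_smul_diagQubit (by simp)]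
  simp only [Fin.sum_univ_two, cons_val_zero, cons_val_one, cons_val_fin_one, mul_one, one_div,
    entropy_diagQubit, Real.binEntropy_one, zero_div, mul_zero, Real.binEntropy_two_inv, zero_add]
  rw [div_self (Real.log_pos one_lt_two).ne', mul_one,
    show t + (1 - t) * 2⁻¹ = (1 + t) / 2 by ring]

/-- In the resource theory of activity on qubits (free states `P₂`, free
channels the passivity-preserving ones), every passive state `ρ ∈ P₂` has the same free
encoding capacity, namely
`sup_{q ∈ [0,1]} [S(q·diag(1,0) + (1−q)·diag(1/2,1/2)) − (1−q)]` (≈ 0.322 bits). -/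
theorem FEC_passive_const (ρ : Mat 2) (hρ : ρ ∈ P2) :
    FEC P2 ρ =
      sSup {c : ℝ | ∃ q ∈ Set.Icc (0 : ℝ) 1,
        c = entropy (q • (Matrix.diagonal ![(1 : ℂ), 0]) +
              (1 - q) • (Matrix.diagonal ![(1/2 : ℂ), (1/2 : ℂ)]))
            - (1 - q)} := by
  simp only [smul_add_smul_eq_diagQubit]
  apply csSup_eq_csSup_of_forall_exists_le
  · rintro c ⟨n, p, N, hp, hN, rfl⟩
    choose q hq₁ hq₂ hNq using fun x => (hN x).2 ρ hρ
    obtain ⟨t, ht, hle⟩ := exists_holevo_diagQubit_le hp (q := q) fun x => ⟨hq₁ x, hq₂ x⟩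
    rw [show (fun x => N x ρ) = fun x => diagQubit (q x) from funext hNq]
    exact ⟨_, ⟨t, ht, rfl⟩, hle⟩
  · rintro c ⟨t, ht, rfl⟩
    refine ⟨_, ⟨2, ![t, 1 - t], ![replaceChannel (diagQubit 1), replaceChannel (diagQubit (1/2))],
      isProb_pair ht, fun x => ?_, rfl⟩,
      (holevo_replaceChannel_diagQubit (trace_eq_one_of_mem_P2 hρ) t).ge⟩
    fin_cases x
    · exact isFreeChannel_replaceChannel_diagQubit ⟨by norm_num, le_rfl⟩
    · exact isFreeChannel_replaceChannel_diagQubit ⟨le_rfl, by norm_num⟩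

end FECpaper
end
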